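/- Let 0 < α₂ < α₁ < 1, C₁ ≥ 0, C₂ ≥ 0 with C₁ + C₂ = 1, and λ > 0. Let (r_i)_{i≥1} be a probability mass function on the positive integers and let r_n(k) denote its k-fold convolution, i.e. r_n(1) = r_n, r_n(k) = Σ_{i=1}^{n} r_i r_{n−i}(k−1), with r_0(0) = 1, r_n(0) = 0 for n ≥ 1 and r_0(k) = 0 for k ≥ 1. Let p_n : [0,∞) → ℝ, n ≥ 0, be differentiable functions whose Caputo fractional derivatives of orders α₁ and α₂ exist (the defining integrals converge), and which satisfy C₁ ∂^{α₁}_t p_n(t) + C₂ ∂^{α₂}_t p_n(t) = −λ(p_n(t) − p_{n−1}(t)) for all n ≥ 0 and t > 0, with the convention p_{−1} ≡ 0. Define q_0 = p_0 and q_n(t) = Σ_{k=1}^{n} r_n(k) p_k(t) for n ≥ 1. Then C₁ ∂^{α₁}_t q_0(t) + C₂ ∂^{α₂}_t q_0(t) = −λ q_0(t), and for every n ≥ 1, C₁ ∂^{α₁}_t q_n(t) + C₂ ∂^{α₂}_t q_n(t) = −λ q_n(t) + λ Σ_{i=1}^{n} r_i q_{n−i}(t). -/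

import Mathlib

/-!
The Caputo derivative is linear on differentiable functions whose Caputo integrands are
integrable, so applying `C₁ ∂^{α₁} + C₂ ∂^{α₂}` to `q_n = Σ_{k=1}^{n} r_n(k) p_k` and using the
equations of the `p_k` gives `-λ Σ_k r_n(k) (p_k - p_{k-1})`. The recursion
`r_n(k+1) = Σ_i r_i r_{n-i}(k)` identifies the shifted part `Σ_k r_n(k) p_{k-1}` with
`Σ_i r_i q_{n-i}`; the boundary terms vanish because `r_n(0) = 0` and `r_n(n+1) = 0` for `n ≥ 1`.
-/

open MeasureTheory Filter Real

noncomputable section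

/-- The Caputo fractional derivative of order `α ∈ (0,1)`:
`∂^α_t f(t) = (1/Γ(1−α)) ∫₀ᵗ (t−r)^{−α} f′(r) dr`. -/
noncomputable def caputo (α : ℝ) (f : ℝ → ℝ) (t : ℝ) : ℝ :=
  (1 / Real.Gamma (1 - α)) * ∫ r in (0:ℝ)..t, (t - r) ^ (-α) * deriv f r

/-- `rconv r n k` is the `k`-fold convolution `r_n(k)` of the probability mass function
`(r_i)_{i ≥ 1}`: `r_0(0) = 1`, `r_n(0) = 0` for `n ≥ 1`, and
`r_n(k+1) = Σ_{i=1}^{n} r_i r_{n−i}(k)`. -/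
noncomputable def rconv (r : ℕ → ℝ) : ℕ → ℕ → ℝ
  | n, 0 => if n = 0 then 1 else 0
  | n, (k + 1) => ∑ i ∈ Finset.Icc 1 n, r i * rconv r (n - i) k

open Finset

lemma caputo_sum_mul {ι : Type*} (α : ℝ) (S : Finset ι) (c : ι → ℝ) (f : ι → ℝ → ℝ) (t : ℝ)
    (hf : ∀ j ∈ S, Differentiable ℝ (f j))
    (hint : ∀ j ∈ S, IntervalIntegrable (fun s => (t - s) ^ (-α) * deriv (f j) s) volume 0 t) :
    caputo α (fun u => ∑ j ∈ S, c j * f j u) t = ∑ j ∈ S, c j * caputo α (f j) t := by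
  have hderiv : ∀ s, deriv (fun u => ∑ j ∈ S, c j * f j u) s = ∑ j ∈ S, c j * deriv (f j) s :=
    fun s => by
      rw [deriv_fun_sum fun j hj => ((hf j hj) s).const_mul (c j)]
      exact sum_congr rfl fun j _ => by rw [deriv_const_mul_field']
  have hintegral : ∫ s in (0 : ℝ)..t, (t - s) ^ (-α) * deriv (fun u => ∑ j ∈ S, c j * f j u) s =
      ∑ j ∈ S, c j * ∫ s in (0 : ℝ)..t, (t - s) ^ (-α) * deriv (f j) s := by
    simp_rw [hderiv, mul_sum, mul_left_comm _ (c _)]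
    rw [intervalIntegral.integral_finsetSum fun j hj => (hint j hj).const_mul (c j)]
    simp_rw [intervalIntegral.integral_const_mul]
  simp only [caputo, hintegral, mul_sum]
  exact sum_congr rfl fun j _ => by ring

lemma rconv_eq_zero_of_lt (r : ℕ → ℝ) {n k : ℕ} (h : n < k) : rconv r n k = 0 := by
  induction k generalizing n with
  | zero => omega
  | succ k ih => exact sum_eq_zero fun i hi => by rw [ih (by grind), mul_zero]

lemma rconv_zero_right_of_ne_zero (r : ℕ → ℝ) {n : ℕ} (hn : n ≠ 0) : rconv r n 0 = 0 := by
  simp [rconv, hn]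

/-- The law of `X_1 + ⋯ + X_N` for `N ∼ x` and i.i.d. `X_i ∼ r`. -/
def compound (r x : ℕ → ℝ) (n : ℕ) : ℝ :=
  ∑ k ∈ range (n + 1), rconv r n k * x k

lemma compound_zero (r x : ℕ → ℝ) : compound r x 0 = x 0 := by
  simp [compound, rconv]

lemma compound_eq_sum_Icc (r x : ℕ → ℝ) {n : ℕ} (hn : 1 ≤ n) :
    compound r x n = ∑ k ∈ Icc 1 n, rconv r n k * x k := by
  rw [compound, range_eq_Ico, sum_eq_sum_Ico_succ_bot (by omega),
    rconv_zero_right_of_ne_zero r (by omega), zero_mul, zero_add]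
  rfl

lemma compound_eq_sum_range_of_le (r x : ℕ → ℝ) {n N : ℕ} (h : n ≤ N) :
    compound r x n = ∑ k ∈ range (N + 1), rconv r n k * x k := by
  refine sum_subset (range_subset_range.2 (by omega)) fun k hk hkn => ?_
  rw [rconv_eq_zero_of_lt r (by grind), zero_mul]

lemma sum_mul_compound_sub (r x : ℕ → ℝ) (n : ℕ) :
    ∑ i ∈ Icc 1 n, r i * compound r x (n - i) = ∑ k ∈ range (n + 1), rconv r n (k + 1) * x k := by
  simp only [compound_eq_sum_range_of_le r x (Nat.sub_le n _), mul_sum]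
  rw [sum_comm]
  refine sum_congr rfl fun k _ => ?_
  rw [rconv, sum_mul]
  exact sum_congr rfl fun i _ => by ring

lemma sum_rconv_mul_sub_pred (r x : ℕ → ℝ) {n : ℕ} (hn : 1 ≤ n) :
    ∑ k ∈ Icc 1 n, rconv r n k * (x k - x (k - 1)) =
      compound r x n - ∑ i ∈ Icc 1 n, r i * compound r x (n - i) := by
  have hshift : ∑ k ∈ Icc 1 n, rconv r n k * x (k - 1) =
      ∑ k ∈ range (n + 1), rconv r n (k + 1) * x k := by
    rw [sum_range_succ, rconv_eq_zero_of_lt r (by omega), zero_mul, add_zero,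
      ← Ico_add_one_right_eq_Icc, sum_Ico_eq_sum_range]
    simp [add_comm]
  simp only [mul_sub, sum_sub_distrib, compound_eq_sum_Icc r x hn, hshift, sum_mul_compound_sub]

theorem compound_mfpp_governing_equations_general
    (α₁ α₂ C₁ C₂ lam : ℝ)
    -- `(r_i)_{i ≥ 1}` is a probability mass function on the positive integers
    (r : ℕ → ℝ)
    -- the state probabilities `p_n` of the MFPP, assumed differentiable with
    -- convergent Caputo integrals of orders `α₁` and `α₂`
    (p : ℕ → ℝ → ℝ)
    (hdiff : ∀ n, Differentiable ℝ (p n))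
    (hint₁ : ∀ n, ∀ t : ℝ, 0 < t →
      IntervalIntegrable (fun s => (t - s) ^ (-α₁) * deriv (p n) s) volume 0 t)
    (hint₂ : ∀ n, ∀ t : ℝ, 0 < t →
      IntervalIntegrable (fun s => (t - s) ^ (-α₂) * deriv (p n) s) volume 0 t)
    -- the governing equations of the `p_n`, with the convention `p_{−1} ≡ 0`
    (hp0 : ∀ t : ℝ, 0 < t →
      C₁ * caputo α₁ (p 0) t + C₂ * caputo α₂ (p 0) t = -lam * (p 0 t - 0))
    (hpn : ∀ n : ℕ, 1 ≤ n → ∀ t : ℝ, 0 < t →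
      C₁ * caputo α₁ (p n) t + C₂ * caputo α₂ (p n) t = -lam * (p n t - p (n - 1) t))
    -- the state probabilities of the compound process
    (q : ℕ → ℝ → ℝ)
    (hq0 : q 0 = p 0)
    (hqn : ∀ n : ℕ, 1 ≤ n → ∀ t : ℝ,
      q n t = ∑ k ∈ Finset.Icc 1 n, rconv r n k * p k t) :
    (∀ t : ℝ, 0 < t →
      C₁ * caputo α₁ (q 0) t + C₂ * caputo α₂ (q 0) t = -lam * q 0 t) ∧
    (∀ n : ℕ, 1 ≤ n → ∀ t : ℝ, 0 < t →
      C₁ * caputo α₁ (q n) t + C₂ * caputo α₂ (q n) t =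
        -lam * q n t + lam * ∑ i ∈ Finset.Icc 1 n, r i * q (n - i) t) := by
  have hq : ∀ m u, q m u = compound r (fun k => p k u) m := by
    intro m u
    rcases Nat.eq_zero_or_pos m with rfl | hm
    · rw [hq0, compound_zero]
    · rw [hqn m hm, compound_eq_sum_Icc _ _ hm]
  refine ⟨fun t ht => by rw [hq0, hp0 t ht, sub_zero], fun n hn t ht => ?_⟩
  have hqn_fun : q n = fun u => ∑ k ∈ Icc 1 n, rconv r n k * p k u := funext (hqn n hn)
  calc C₁ * caputo α₁ (q n) t + C₂ * caputo α₂ (q n) t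
      = ∑ k ∈ Icc 1 n, rconv r n k * (C₁ * caputo α₁ (p k) t + C₂ * caputo α₂ (p k) t) := by
        rw [hqn_fun, caputo_sum_mul _ _ _ _ _ (fun k _ => hdiff k) (fun k _ => hint₁ k t ht),
          caputo_sum_mul _ _ _ _ _ (fun k _ => hdiff k) (fun k _ => hint₂ k t ht),
          mul_sum, mul_sum, ← sum_add_distrib]
        exact sum_congr rfl fun k _ => by ring
    _ = -lam * ∑ k ∈ Icc 1 n, rconv r n k * (p k t - p (k - 1) t) := by
        rw [mul_sum]
        exact sum_congr rfl fun k hk => by rw [hpn k (mem_Icc.1 hk).1 t ht]; ring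
    _ = -lam * q n t + lam * ∑ i ∈ Icc 1 n, r i * q (n - i) t := by
        simp only [sum_rconv_mul_sub_pred _ _ hn, hq]
        ring

/-- The governing fractional differential equations of the state
probabilities of the compound MFPP, derived from those of the MFPP. -/
theorem compound_mfpp_governing_equations
    (α₁ α₂ C₁ C₂ lam : ℝ)
    (hα₂ : 0 < α₂) (hα₂₁ : α₂ < α₁) (hα₁ : α₁ < 1)
    (hC₁ : 0 ≤ C₁) (hC₂ : 0 ≤ C₂) (hC : C₁ + C₂ = 1) (hlam : 0 < lam)
    -- `(r_i)_{i ≥ 1}` is a probability mass function on the positive integers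
    (r : ℕ → ℝ) (hr0 : r 0 = 0) (hrnn : ∀ i, 0 ≤ r i) (hrsum : ∑' i, r i = 1)
    -- the state probabilities `p_n` of the MFPP, assumed differentiable with
    -- convergent Caputo integrals of orders `α₁` and `α₂`
    (p : ℕ → ℝ → ℝ)
    (hdiff : ∀ n, Differentiable ℝ (p n))
    (hint₁ : ∀ n, ∀ t : ℝ, 0 < t →
      IntervalIntegrable (fun s => (t - s) ^ (-α₁) * deriv (p n) s) volume 0 t)
    (hint₂ : ∀ n, ∀ t : ℝ, 0 < t →
      IntervalIntegrable (fun s => (t - s) ^ (-α₂) * deriv (p n) s) volume 0 t)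
    -- the governing equations of the `p_n`, with the convention `p_{−1} ≡ 0`
    (hp0 : ∀ t : ℝ, 0 < t →
      C₁ * caputo α₁ (p 0) t + C₂ * caputo α₂ (p 0) t = -lam * (p 0 t - 0))
    (hpn : ∀ n : ℕ, 1 ≤ n → ∀ t : ℝ, 0 < t →
      C₁ * caputo α₁ (p n) t + C₂ * caputo α₂ (p n) t = -lam * (p n t - p (n - 1) t))
    -- the state probabilities of the compound process
    (q : ℕ → ℝ → ℝ)
    (hq0 : q 0 = p 0)
    (hqn : ∀ n : ℕ, 1 ≤ n → ∀ t : ℝ,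
      q n t = ∑ k ∈ Finset.Icc 1 n, rconv r n k * p k t) :
    (∀ t : ℝ, 0 < t →
      C₁ * caputo α₁ (q 0) t + C₂ * caputo α₂ (q 0) t = -lam * q 0 t) ∧
    (∀ n : ℕ, 1 ≤ n → ∀ t : ℝ, 0 < t →
      C₁ * caputo α₁ (q n) t + C₂ * caputo α₂ (q n) t =
        -lam * q n t + lam * ∑ i ∈ Finset.Icc 1 n, r i * q (n - i) t) :=
  compound_mfpp_governing_equations_general α₁ α₂ C₁ C₂ lam r p hdiff hint₁ hint₂ hp0 hpn q hq0 hqn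

end
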